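/- If Φ ∈ ℝ^{m×n} has a nontrivial nullspace, then the maximum abstract simplicial complex associated with Φ equals {S ⊆ U_n : ‖z_S‖₁ < 1/2 for every z ∈ MinSupp(null(Φ)) ∩ S₁^{n-1}}. -/

import Mathlib

/-!
Call `u` and `v` sign-compatible when `0 ≤ u i * v i` for every `i`. Then `|u + v| = |u| + |v|`
coordinatewise, so `x ↦ ‖x_S‖₁` is additive on sign-compatible sums, and the strict inequality
`‖x_S‖₁ < ‖x_{Sᶜ}‖₁` is preserved by them. A nonzero vector `η` of a subspace `V` whose support
is not minimal is a sign-compatible sum of two nonzero vectors of `V` with strictly smaller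
support: for `y ∈ V` with smaller support, move from `η` along `y` and along `-y` until a
coordinate of `η` first vanishes, and write `η` as a positive combination of the two endpoints
(or, if `y` never changes the sign of a coordinate, of one endpoint and a multiple of `y`).
Induction on the support reduces the inequality to vectors of minimal support, where it is the
normalized condition `‖z_S‖₁ < 1/2`.
-/

/-- The ℓ₁ norm of a vector in ℝⁿ. -/
noncomputable def l1 {n : ℕ} (x : Fin n → ℝ) : ℝ := ∑ i, |x i|

/-- The ℓ₁ norm of the restriction of a vector to an index set `S`. -/
noncomputable def l1S {n : ℕ} (S : Finset (Fin n)) (x : Fin n → ℝ) : ℝ := ∑ i ∈ S, |x i|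

/-- The maximum abstract simplicial complex associated with `Φ`:
all index sets `S` with `‖η_S‖₁ < ‖η_{Sᶜ}‖₁` for every nonzero `η ∈ null(Φ)`. -/
def Tmax {m n : ℕ} (Φ : Matrix (Fin m) (Fin n) ℝ) : Set (Finset (Fin n)) :=
  {S | ∀ η : Fin n → ℝ, Φ.mulVec η = 0 → η ≠ 0 → l1S S η < l1S Sᶜ η}

/-- Membership in `MinSupp(null Φ)`: `z` is a nonzero nullspace vector such that no nonzero
nullspace vector has support strictly contained in the support of `z`. -/
def MinSuppNull {m n : ℕ} (Φ : Matrix (Fin m) (Fin n) ℝ) : Set (Fin n → ℝ) :=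
  {z | Φ.mulVec z = 0 ∧ z ≠ 0 ∧
    ¬∃ y : Fin n → ℝ, Φ.mulVec y = 0 ∧ y ≠ 0 ∧ Function.support y ⊂ Function.support z}

open Function

lemma mul_nonneg_of_mul_nonneg_of_mul_nonneg {a b c : ℝ} (ha : 0 ≤ c * a) (hb : 0 ≤ c * b)
    (hc : c = 0 → a = 0) : 0 ≤ a * b := by
  rcases eq_or_ne c 0 with rfl | hc0
  · simp [hc rfl]
  · refine nonneg_of_mul_nonneg_right (a := c ^ 2) ?_ (by positivity)
    calc (0 : ℝ) ≤ (c * a) * (c * b) := mul_nonneg ha hb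
      _ = c ^ 2 * (a * b) := by ring

section MinimalSupport

variable {ι : Type*}

lemma support_sub_smul_subset {η y : ι → ℝ} (h : support y ⊆ support η) (t : ℝ) :
    support (η - t • y) ⊆ support η :=
  (support_sub _ _).trans (Set.union_subset le_rfl ((support_smul_subset_right _ _).trans h))

lemma exists_min_ratio [Fintype ι] (η y : ι → ℝ) (h : ∃ i, 0 < η i * y i) :
    ∃ t > 0, (∀ i, t * (η i * y i) ≤ η i ^ 2) ∧
      ∃ i₀, η i₀ ≠ 0 ∧ t * (η i₀ * y i₀) = η i₀ ^ 2 := by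
  classical
  obtain ⟨i₀, hi₀, hmin⟩ := (Finset.univ.filter fun i => 0 < η i * y i).exists_min_image
    (fun i => η i ^ 2 / (η i * y i)) (by simpa [Finset.Nonempty] using h)
  simp only [Finset.mem_filter, Finset.mem_univ, true_and] at hi₀ hmin
  have hη₀ : η i₀ ≠ 0 := by rintro h; simp [h] at hi₀
  have ht : 0 < η i₀ ^ 2 / (η i₀ * y i₀) := div_pos (by positivity) hi₀
  refine ⟨_, ht, fun i => ?_, i₀, hη₀, div_mul_cancel₀ _ hi₀.ne'⟩
  rcases lt_or_ge 0 (η i * y i) with hi | hi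
  · exact (le_div_iff₀ hi).mp (hmin i hi)
  · exact (mul_nonpos_of_nonneg_of_nonpos ht.le hi).trans (sq_nonneg _)

lemma exists_sub_smul_support_ssubset [Fintype ι] {η y : ι → ℝ}
    (hsupp : support y ⊂ support η) (hpos : ∃ i, 0 < η i * y i) :
    ∃ t : ℝ, 0 < t ∧ (∀ i, 0 ≤ η i * (η - t • y) i) ∧ support (η - t • y) ⊂ support η ∧
      η - t • y ≠ 0 := by
  obtain ⟨t, ht, hle, i₀, hη₀, heq⟩ := exists_min_ratio η y hpos
  have hcoord : ∀ i, η i * (η - t • y) i = η i ^ 2 - t * (η i * y i) := fun i => by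
    simp only [Pi.sub_apply, Pi.smul_apply, smul_eq_mul]; ring
  obtain ⟨j, hjη, hjy⟩ := Set.exists_of_ssubset hsupp
  refine ⟨t, ht, fun i => by linarith [hcoord i, hle i], ?_, ?_⟩
  · refine (support_sub_smul_subset hsupp.1 t).ssubset_of_ne fun hs => ?_
    have hi₀ : (η - t • y) i₀ ≠ 0 := mem_support.mp (hs ▸ mem_support.mpr hη₀)
    exact hi₀ ((mul_eq_zero.mp (by linarith [hcoord i₀])).resolve_left hη₀)
  · intro h0
    have : (η - t • y) j = η j := by simp [notMem_support.mp hjy]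
    exact hjη (this ▸ congrFun h0 j)

lemma exists_add_eq_of_support_ssubset [Fintype ι] (V : Submodule ℝ (ι → ℝ)) {η y : ι → ℝ}
    (hη : η ∈ V) (hy : y ∈ V) (hy0 : y ≠ 0) (hsupp : support y ⊂ support η) :
    ∃ u ∈ V, ∃ v ∈ V, u ≠ 0 ∧ v ≠ 0 ∧ support u ⊂ support η ∧ support v ⊂ support η ∧
      (∀ i, 0 ≤ u i * v i) ∧ u + v = η := by
  wlog hpos : ∃ i, 0 < η i * y i generalizing y
  · refine this (V.neg_mem hy) (neg_ne_zero.mpr hy0) (by rwa [support_neg]) ?_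
    obtain ⟨i, hi⟩ := Function.ne_iff.mp hy0
    have hne : η i * y i ≠ 0 := mul_ne_zero (hsupp.1 hi) hi
    push Not at hpos
    exact ⟨i, by simpa using (hpos i).lt_of_ne hne⟩
  obtain ⟨t, ht, hb, hbsupp, hb0⟩ := exists_sub_smul_support_ssubset hsupp hpos
  have hbV : η - t • y ∈ V := V.sub_mem hη (V.smul_mem t hy)
  have hbη : ∀ i, η i = 0 → (η - t • y) i = 0 := fun i hi =>
    notMem_support.mp fun h => hbsupp.1 h hi
  by_cases hneg : ∃ i, η i * y i < 0
  · obtain ⟨s, hs, ha, hasupp, ha0⟩ :=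
      exists_sub_smul_support_ssubset (η := η) (y := -y) (by rwa [support_neg])
        (by simpa using hneg)
    have hst : 0 < s + t := add_pos hs ht
    refine ⟨(s / (s + t)) • (η - t • y), V.smul_mem _ hbV, (t / (s + t)) • (η - s • -y),
      V.smul_mem _ (V.sub_mem hη (V.smul_mem s (V.neg_mem hy))),
      smul_ne_zero (by positivity) hb0, smul_ne_zero (by positivity) ha0,
      by rwa [support_const_smul_of_ne_zero _ _ (by positivity)],
      by rwa [support_const_smul_of_ne_zero _ _ (by positivity)], fun i => ?_, ?_⟩
    · have hba := mul_nonneg_of_mul_nonneg_of_mul_nonneg (hb i) (ha i) (hbη i)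
      calc (0 : ℝ) ≤ (s / (s + t)) * (t / (s + t)) * ((η - t • y) i * (η - s • -y) i) := by
            positivity
        _ = _ := by simp only [Pi.smul_apply, smul_eq_mul]; ring
    · ext i
      simp only [Pi.add_apply, Pi.smul_apply, Pi.sub_apply, Pi.neg_apply, smul_eq_mul]
      field_simp
      ring
  · push Not at hneg
    refine ⟨η - t • y, hbV, t • y, V.smul_mem t hy, hb0, smul_ne_zero ht.ne' hy0, hbsupp,
      by rwa [support_const_smul_of_ne_zero _ _ ht.ne'], fun i => ?_, sub_add_cancel _ _⟩
    refine mul_nonneg_of_mul_nonneg_of_mul_nonneg (hb i) ?_ (hbη i)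
    simpa only [Pi.smul_apply, smul_eq_mul, mul_left_comm] using mul_nonneg ht.le (hneg i)

theorem Submodule.forall_of_forall_minimal_support [Finite ι] (V : Submodule ℝ (ι → ℝ))
    {P : (ι → ℝ) → Prop} (hadd : ∀ u v, (∀ i, 0 ≤ u i * v i) → P u → P v → P (u + v))
    (hmin : ∀ z ∈ V, z ≠ 0 → (∀ y ∈ V, y ≠ 0 → ¬support y ⊂ support z) → P z)
    (η : ι → ℝ) (hη : η ∈ V) (hη0 : η ≠ 0) : P η := by
  have := Fintype.ofFinite ι
  by_cases h : ∃ y ∈ V, y ≠ 0 ∧ support y ⊂ support η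
  · obtain ⟨y, hy, hy0, hsupp⟩ := h
    obtain ⟨u, hu, v, hv, hu0, hv0, husupp, hvsupp, huv, rfl⟩ :=
      exists_add_eq_of_support_ssubset V hη hy hy0 hsupp
    exact hadd u v huv (forall_of_forall_minimal_support V hadd hmin u hu hu0)
      (forall_of_forall_minimal_support V hadd hmin v hv hv0)
  · push Not at h
    exact hmin η hη hη0 fun y hy hy0 => h y hy hy0
termination_by (support η).ncard
decreasing_by
  all_goals exact Set.ncard_lt_ncard ‹_› (Set.toFinite _)

end MinimalSupport

lemma l1S_add_l1S_compl {n : ℕ} (S : Finset (Fin n)) (x : Fin n → ℝ) :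
    l1S S x + l1S Sᶜ x = l1 x :=
  Finset.sum_add_sum_compl S _

lemma l1S_smul {n : ℕ} (S : Finset (Fin n)) (c : ℝ) (x : Fin n → ℝ) :
    l1S S (c • x) = |c| * l1S S x := by
  simp only [l1S, Finset.mul_sum, Pi.smul_apply, smul_eq_mul, abs_mul]

lemma l1_smul {n : ℕ} (c : ℝ) (x : Fin n → ℝ) : l1 (c • x) = |c| * l1 x :=
  l1S_smul Finset.univ c x

lemma l1S_add_of_mul_nonneg {n : ℕ} (S : Finset (Fin n)) {u v : Fin n → ℝ}
    (h : ∀ i, 0 ≤ u i * v i) : l1S S (u + v) = l1S S u + l1S S v := by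
  simp only [l1S, ← Finset.sum_add_distrib, Pi.add_apply]
  exact Finset.sum_congr rfl fun i _ => (abs_add_eq_add_abs_iff _ _).mpr (mul_nonneg_iff.mp (h i))

lemma l1_add_of_mul_nonneg {n : ℕ} {u v : Fin n → ℝ} (h : ∀ i, 0 ≤ u i * v i) :
    l1 (u + v) = l1 u + l1 v :=
  l1S_add_of_mul_nonneg Finset.univ h

lemma l1_pos {n : ℕ} {x : Fin n → ℝ} (hx : x ≠ 0) : 0 < l1 x := by
  obtain ⟨i, hi⟩ := Function.ne_iff.mp hx
  exact Finset.sum_pos' (fun i _ => abs_nonneg (x i)) ⟨i, Finset.mem_univ i, abs_pos.mpr hi⟩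

theorem stmt8_general {m n : ℕ} (Φ : Matrix (Fin m) (Fin n) ℝ) :
    Tmax Φ = {S : Finset (Fin n) |
      ∀ z ∈ MinSuppNull Φ ∩ {x | l1 x = 1}, l1S S z < 1 / 2} := by
  ext S
  constructor
  · rintro hS z ⟨⟨hz, hz0, -⟩, hz1 : l1 z = 1⟩
    linarith [hS z hz hz0, l1S_add_l1S_compl S z]
  · intro hS η hη hη0
    suffices 2 * l1S S η < l1 η by linarith [l1S_add_l1S_compl S η]
    refine (LinearMap.ker Φ.mulVecLin).forall_of_forall_minimal_support
      (P := fun x => 2 * l1S S x < l1 x) ?_ ?_ η hη hη0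
    · intro u v huv hu hv
      rw [l1S_add_of_mul_nonneg S huv, l1_add_of_mul_nonneg huv]
      linarith
    · intro z hz hz0 hzmin
      have hl := l1_pos hz0
      have hc : (l1 z)⁻¹ ≠ 0 := inv_ne_zero hl.ne'
      have hsupp := support_const_smul_of_ne_zero _ z hc
      have hw := hS ((l1 z)⁻¹ • z)
        ⟨⟨by rw [Matrix.mulVec_smul, show Φ.mulVec z = 0 from hz, smul_zero], smul_ne_zero hc hz0,
          fun ⟨y, hy, hy0, hsub⟩ => hzmin y hy hy0 (hsupp ▸ hsub)⟩,
         show l1 _ = 1 by rw [l1_smul, abs_inv, abs_of_pos hl, inv_mul_cancel₀ hl.ne']⟩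
      rw [l1S_smul, abs_inv, abs_of_pos hl] at hw
      linarith [(inv_mul_lt_iff₀ hl).mp hw]

/-- If `Φ ∈ ℝ^{m×n}` has a nontrivial nullspace, then the maximum abstract simplicial
complex associated with `Φ` equals
`{S ⊆ U_n : ‖z_S‖₁ < 1/2 for every z ∈ MinSupp(null Φ) ∩ S₁^{n-1}}`. -/
theorem stmt8 {m n : ℕ} (Φ : Matrix (Fin m) (Fin n) ℝ)
    (hker : ∃ η : Fin n → ℝ, η ≠ 0 ∧ Φ.mulVec η = 0) :
    Tmax Φ = {S : Finset (Fin n) |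
      ∀ z ∈ MinSuppNull Φ ∩ {x | l1 x = 1}, l1S S z < 1 / 2} :=
  stmt8_general Φ
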